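/- Let h > 0, w₂ > 0 (w₂ ≠ 1), w₁ > 0, and c > 0. Consider the four-point stencil {x − w₂h, x − h, x, x + w₁h} and the weights β_{-2}, β_{-1}, β_0, β_{+1} given by the closed-form expressions of Theorem 2 of the paper (e.g. β₀ = μ₂/(c²h²w₂w₁) with μ₂ = −w₂(2c² + h²(w₁−1)w₁ + h²) + (w₁−1)(2c² − h²w₁) + h²(w₁−1)w₂²). Then for every six-times continuously differentiable f, the error β_{-2}f(x−w₂h) + β_{-1}f(x−h) + β_0 f(x) + β_{+1}f(x+w₁h) − f''(x) equals [(w₂(w₁−1) + w₁)(c² f⁗(x) + 12 f''(x))/(12c²)] h² + O(h³) as h → 0. -/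

import Mathlib

open Filter Asymptotics Topology

/-- `μ₁` of Theorem 2. -/
noncomputable def mu1 (h c w2 w1 : ℝ) : ℝ :=
  -w1 * (2 * c ^ 2 + h ^ 2 * w2 * (w2 + 3) + 3 * h ^ 2)
    + w2 * (2 * c ^ 2 + h ^ 2 * w2 + 3 * h ^ 2) + h ^ 2 * (w2 + 1) * w1 ^ 2

/-- `μ₂` of Theorem 2. -/
noncomputable def mu2 (h c w2 w1 : ℝ) : ℝ :=
  -w2 * (2 * c ^ 2 + h ^ 2 * (w1 - 1) * w1 + h ^ 2)
    + (w1 - 1) * (2 * c ^ 2 - h ^ 2 * w1) + h ^ 2 * (w1 - 1) * w2 ^ 2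

/-- Gaussian RBF--FD second-derivative weight at the node `x - w₂ h`. -/
noncomputable def betam2 (h c w2 w1 : ℝ) : ℝ :=
  ((w1 - 1) * (2 * c ^ 2 - h ^ 2 * w1) + 3 * h ^ 2 * w2 ^ 2 * (w1 - 1)
      - h ^ 2 * w2 * ((w1 - 3) * w1 + 1))
    / (c ^ 2 * h ^ 2 * (w2 - 1) * w2 * (w2 + w1))

/-- Gaussian RBF--FD second-derivative weight at the node `x - h`. -/
noncomputable def betam1 (h c w2 w1 : ℝ) : ℝ :=
  mu1 h c w2 w1 / (c ^ 2 * h ^ 2 * (w2 - 1) * (w1 + 1))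

/-- Gaussian RBF--FD second-derivative weight at the center node `x`. -/
noncomputable def beta0 (h c w2 w1 : ℝ) : ℝ :=
  mu2 h c w2 w1 / (c ^ 2 * h ^ 2 * w2 * w1)

/-- Gaussian RBF--FD second-derivative weight at the node `x + w₁ h`. -/
noncomputable def betap1 (h c w2 w1 : ℝ) : ℝ :=
  ((w2 + 1) * (2 * c ^ 2 + h ^ 2 * w2) + 3 * h ^ 2 * (w2 + 1) * w1 ^ 2
      - h ^ 2 * (w2 * (w2 + 3) + 1) * w1)
    / (c ^ 2 * h ^ 2 * w1 * (w1 + 1) * (w2 + w1))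


/-!
Every weight is `O(h⁻²)`, so replacing `f` at each node by its Taylor polynomial of degree five
costs only `o(h³)`. What remains is `∑ₖ f⁽ᵏ⁾(x) Mₖ / k!`, where `Mₖ = ∑ᵢ βᵢ (ξᵢ h)ᵏ` is the stencil
applied to `(· - x)ᵏ`. The Gaussian weights satisfy `M₀ = M₁ = 0` and
`M₂ = 2 + 2σh²/c²` exactly (with `σ = w₂(w₁ - 1) + w₁`), while `M₃ = O(h³)`,
`M₄ = 2σh² + O(h⁴)` and `M₅ = O(h³)`; the `h²` terms of `M₂` and `M₄` give the leading error.
-/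

open Finset

theorem taylor_isLittleO_add_mul {f : ℝ → ℝ} {n : ℕ} (hf : ContDiff ℝ n f) (x s : ℝ) :
    (fun h => f (x + s * h) -
        ∑ k ∈ range (n + 1), iteratedDeriv k f x * (s * h) ^ k / k.factorial)
      =o[𝓝 0] fun h => h ^ n := by
  have hnode : Tendsto (fun h : ℝ => x + s * h) (𝓝 0) (𝓝 x) := by
    simpa using ((continuous_const_mul s).const_add x).tendsto 0
  have hpow : (fun h : ℝ => (x + s * h - x) ^ n) =O[𝓝 0] fun h => h ^ n := by
    simpa [mul_pow] using isBigO_const_mul_self (s ^ n) (fun h : ℝ => h ^ n) (𝓝 0)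
  refine (((taylor_isLittleO_univ hf).comp_tendsto hnode).trans_isBigO hpow).congr_left fun h => ?_
  simp only [Function.comp_apply, taylor_within_apply, iteratedDerivWithin_univ, smul_eq_mul,
    add_sub_cancel_left]
  congr 1
  exact sum_congr rfl fun k _ => by ring

theorem isBigO_div_mul_sq_mul {p : ℝ → ℝ} (hp : ContinuousAt p 0) (a b : ℝ) :
    (fun h => p h / (a * (h ^ 2 * b))) =O[𝓝[≠] 0] fun h => (h ^ 2)⁻¹ := by
  have hbdd : (fun h => p h / (a * b)) =O[𝓝[≠] 0] fun _ => (1 : ℝ) :=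
    ((hp.div_const _).tendsto.isBigO_one ℝ).mono nhdsWithin_le_nhds
  simpa [div_eq_mul_inv, mul_inv, mul_comm, mul_left_comm, mul_assoc] using
    hbdd.mul (isBigO_refl (fun h : ℝ => (h ^ 2)⁻¹) _)

theorem isLittleO_mul_taylor_remainder {f β : ℝ → ℝ} {m k : ℕ}
    (hβ : β =O[𝓝[≠] 0] fun h => (h ^ m)⁻¹) (hf : ContDiff ℝ (m + k : ℕ) f) (x s : ℝ) :
    (fun h => β h * (f (x + s * h) -
        ∑ j ∈ range (m + k + 1), iteratedDeriv j f x * (s * h) ^ j / j.factorial))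
      =o[𝓝[≠] 0] fun h => h ^ k := by
  refine (hβ.mul_isLittleO ((taylor_isLittleO_add_mul hf x s).mono nhdsWithin_le_nhds)).congr'
    EventuallyEq.rfl ?_
  filter_upwards [self_mem_nhdsWithin] with h hh
  rw [pow_add]
  field_simp [pow_ne_zero m hh]

theorem isBigO_mul_pow_of_isBigO_inv_pow {β : ℝ → ℝ} {m : ℕ}
    (hβ : β =O[𝓝[≠] 0] fun h => (h ^ m)⁻¹) (k : ℕ) (s : ℝ) :
    (fun h => β h * (s * h) ^ (m + k)) =O[𝓝[≠] 0] fun h => h ^ k := by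
  have hpow : (fun h => (s * h) ^ (m + k)) =O[𝓝[≠] 0] fun h => h ^ (m + k) :=
    (isBigO_const_mul_self (s ^ (m + k)) _ _).congr_left fun h => (mul_pow ..).symm
  refine (hβ.mul hpow).congr' EventuallyEq.rfl ?_
  filter_upwards [self_mem_nhdsWithin] with h hh
  rw [pow_add]
  field_simp [pow_ne_zero m hh]

def stencilNode (w2 w1 : ℝ) : Fin 4 → ℝ := ![-w2, -1, 0, w1]

noncomputable def stencilWeight (h c w2 w1 : ℝ) : Fin 4 → ℝ :=
  ![betam2 h c w2 w1, betam1 h c w2 w1, beta0 h c w2 w1, betap1 h c w2 w1]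

/-- The stencil applied to `(· - x) ^ k`. -/
noncomputable def stencilMoment (k : ℕ) (h c w2 w1 : ℝ) : ℝ :=
  ∑ i, stencilWeight h c w2 w1 i * (stencilNode w2 w1 i * h) ^ k

theorem stencilWeight_isBigO_inv_sq (c w2 w1 : ℝ) (i : Fin 4) :
    (fun h => stencilWeight h c w2 w1 i) =O[𝓝[≠] 0] fun h => (h ^ 2)⁻¹ := by
  fin_cases i <;>
    simp only [stencilWeight, betam2, betam1, beta0, betap1, mu1, mu2, mul_assoc] <;>
    exact isBigO_div_mul_sq_mul (by fun_prop) _ _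

theorem stencilMoment_five_isBigO (c w2 w1 : ℝ) :
    (fun h => stencilMoment 5 h c w2 w1) =O[𝓝[≠] 0] fun h => h ^ 3 :=
  IsBigO.fun_sum fun i _ =>
    isBigO_mul_pow_of_isBigO_inv_pow (stencilWeight_isBigO_inv_sq c w2 w1 i) 3 _

section Moments

variable {c w2 w1 : ℝ}

theorem stencilMoment_eq (k : ℕ) (h : ℝ) : stencilMoment k h c w2 w1 =
    betam2 h c w2 w1 * (-w2 * h) ^ k + betam1 h c w2 w1 * (-h) ^ k + beta0 h c w2 w1 * 0 ^ k
      + betap1 h c w2 w1 * (w1 * h) ^ k := by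
  simp [stencilMoment, Fin.sum_univ_four, stencilWeight, stencilNode]

theorem stencilMoment_zero {h : ℝ} (hh : h ≠ 0) (hc : c ≠ 0) (hw2 : w2 ≠ 0) (hw21 : w2 ≠ 1)
    (hw1 : w1 ≠ 0) (hw11 : w1 + 1 ≠ 0) (hw : w2 + w1 ≠ 0) : stencilMoment 0 h c w2 w1 = 0 := by
  have : w2 - 1 ≠ 0 := sub_ne_zero.mpr hw21
  simp only [stencilMoment_eq, betam2, betam1, beta0, betap1, mu1, mu2]
  field_simp
  ring

theorem stencilMoment_one {h : ℝ} (hh : h ≠ 0) (hc : c ≠ 0) (hw2 : w2 ≠ 0) (hw21 : w2 ≠ 1)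
    (hw1 : w1 ≠ 0) (hw11 : w1 + 1 ≠ 0) (hw : w2 + w1 ≠ 0) : stencilMoment 1 h c w2 w1 = 0 := by
  have : w2 - 1 ≠ 0 := sub_ne_zero.mpr hw21
  simp only [stencilMoment_eq, betam2, betam1, beta0, betap1, mu1, mu2]
  field_simp
  ring

theorem stencilMoment_two {h : ℝ} (hh : h ≠ 0) (hc : c ≠ 0) (hw2 : w2 ≠ 0) (hw21 : w2 ≠ 1)
    (hw1 : w1 ≠ 0) (hw11 : w1 + 1 ≠ 0) (hw : w2 + w1 ≠ 0) :
    stencilMoment 2 h c w2 w1 = 2 + 2 * (w2 * (w1 - 1) + w1) * h ^ 2 / c ^ 2 := by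
  have : w2 - 1 ≠ 0 := sub_ne_zero.mpr hw21
  simp only [stencilMoment_eq, betam2, betam1, beta0, betap1, mu1, mu2]
  field_simp
  ring

theorem stencilMoment_three_isBigO (hc : c ≠ 0) (hw2 : w2 ≠ 0) (hw21 : w2 ≠ 1) (hw1 : w1 ≠ 0)
    (hw11 : w1 + 1 ≠ 0) (hw : w2 + w1 ≠ 0) :
    (fun h => stencilMoment 3 h c w2 w1) =O[𝓝[≠] 0] fun h => h ^ 3 := by
  have : w2 - 1 ≠ 0 := sub_ne_zero.mpr hw21
  refine (isBigO_const_mul_self ((3 * w2 + 3 * w2 ^ 2 - 3 * w1 - 7 * w1 * w2 - 3 * w1 * w2 ^ 2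
    + 3 * w1 ^ 2 + 3 * w1 ^ 2 * w2) / c ^ 2) _ _).congr' ?_ EventuallyEq.rfl
  filter_upwards [self_mem_nhdsWithin] with h hh
  simp only [stencilMoment_eq, betam2, betam1, beta0, betap1, mu1, mu2]
  field_simp [show h ≠ 0 from hh]
  ring

theorem stencilMoment_four_sub_isBigO (hc : c ≠ 0) (hw2 : w2 ≠ 0) (hw21 : w2 ≠ 1)
    (hw1 : w1 ≠ 0) (hw11 : w1 + 1 ≠ 0) (hw : w2 + w1 ≠ 0) :
    (fun h => stencilMoment 4 h c w2 w1 - 2 * (w2 * (w1 - 1) + w1) * h ^ 2)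
      =O[𝓝[≠] 0] fun h => h ^ 3 := by
  have : w2 - 1 ≠ 0 := sub_ne_zero.mpr hw21
  refine (((isLittleO_pow_pow (by norm_num : 3 < 4)).const_mul_left ((-3 * w2 - 4 * w2 ^ 2
    - 3 * w2 ^ 3 + 3 * w1 + 9 * w1 * w2 + 9 * w1 * w2 ^ 2 + 3 * w1 * w2 ^ 3 - 4 * w1 ^ 2
    - 9 * w1 ^ 2 * w2 - 4 * w1 ^ 2 * w2 ^ 2 + 3 * w1 ^ 3 + 3 * w1 ^ 3 * w2) / c ^ 2)).isBigO.mono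
    nhdsWithin_le_nhds).congr' ?_ EventuallyEq.rfl
  filter_upwards [self_mem_nhdsWithin] with h hh
  simp only [stencilMoment_eq, betam2, betam1, beta0, betap1, mu1, mu2]
  field_simp [show h ≠ 0 from hh]
  ring

end Moments

theorem rbf_fd_second_derivative_error
    (w1 w2 c : ℝ) (hw1 : 0 < w1) (hw2 : 0 < w2) (hw2' : w2 ≠ 1) (hc : 0 < c)
    (f : ℝ → ℝ) (hf : ContDiff ℝ 6 f) (x : ℝ) :
    (fun h : ℝ =>
        betam2 h c w2 w1 * f (x - w2 * h) + betam1 h c w2 w1 * f (x - h)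
          + beta0 h c w2 w1 * f x + betap1 h c w2 w1 * f (x + w1 * h)
          - iteratedDeriv 2 f x
          - (w2 * (w1 - 1) + w1) * (c ^ 2 * iteratedDeriv 4 f x + 12 * iteratedDeriv 2 f x)
              / (12 * c ^ 2) * h ^ 2)
      =O[𝓝[>] (0 : ℝ)] fun h : ℝ => h ^ 3 := by
  have hc0 : c ≠ 0 := hc.ne'
  have hw10 : w1 ≠ 0 := hw1.ne'
  have hw20 : w2 ≠ 0 := hw2.ne'
  have hw11 : w1 + 1 ≠ 0 := by positivity
  have hw : w2 + w1 ≠ 0 := by positivity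
  have hR := IsLittleO.fun_sum fun i (_ : i ∈ univ) => isLittleO_mul_taylor_remainder
    (stencilWeight_isBigO_inv_sq c w2 w1 i)
    (hf.of_le (by norm_num) : ContDiff ℝ (2 + 3 : ℕ) f) x (stencilNode w2 w1 i)
  have hM3 := stencilMoment_three_isBigO hc0 hw20 hw2' hw10 hw11 hw
  have hM4 := stencilMoment_four_sub_isBigO hc0 hw20 hw2' hw10 hw11 hw
  have hM5 := stencilMoment_five_isBigO c w2 w1
  refine ((hR.isBigO.add (((hM3.const_mul_left (iteratedDeriv 3 f x / 6)).add
    (hM4.const_mul_left (iteratedDeriv 4 f x / 24))).add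
    (hM5.const_mul_left (iteratedDeriv 5 f x / 120)))).mono (nhdsGT_le_nhdsNE 0)).congr' ?_
    EventuallyEq.rfl
  filter_upwards [self_mem_nhdsWithin] with h (hh : 0 < h)
  have hM0 := stencilMoment_zero hh.ne' hc0 hw20 hw2' hw10 hw11 hw
  have hM1 := stencilMoment_one hh.ne' hc0 hw20 hw2' hw10 hw11 hw
  have hM2 := stencilMoment_two hh.ne' hc0 hw20 hw2' hw10 hw11 hw
  simp only [stencilMoment, Fin.sum_univ_four, stencilWeight, stencilNode, Matrix.cons_val,
    Nat.reduceAdd, sum_range_succ, sum_range_zero, Nat.factorial, Nat.succ_eq_add_one,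
    Nat.reduceMul, Nat.cast_ofNat, Nat.cast_one, iteratedDeriv_zero, neg_mul, one_mul, zero_mul,
    add_zero, ← sub_eq_add_neg] at hM0 hM1 hM2 ⊢
  linear_combination (norm := skip)
    (-f x) * hM0 - iteratedDeriv 1 f x * hM1 - iteratedDeriv 2 f x / 2 * hM2
  field_simp
  ring
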